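/- arXiv:2002.12330 — 2 statements merged into one kernel-verified Lean document; each statement's English description precedes it below -/
import Mathlib

section
/- If G is a k×n generating matrix of a linear code C over a finite field F_q, then there exists a permutation x of the n coordinates such that the reduced row echelon form R of G·P_x (where P_x is the permutation matrix of x) has a row whose Hamming weight equals the minimum distance of C. -/
/-!
Let `c` be a codeword of minimum weight `d` and permute the coordinates so that the `n - d` zeros
of `c` come first. In the RREF `R` of the permuted generator matrix some nonzero row has its pivot
beyond these first `n - d` columns: otherwise the pivot columns of `R`, which read off the
coefficients of `c` in the rows of `R`, would all lie in the zero block of `c`, forcing `c = 0`.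
That row vanishes on the zero block, so its weight is at most `d`, and it is a nonzero codeword.

The RREF itself is `B⁻¹ M`, where `B` collects the greedy pivot columns of `M`, those not in the
span of the columns to their left.
-/

/-- A matrix is in reduced row echelon form: zero rows are below nonzero rows;
each nonzero row has a pivot (first nonzero entry) equal to 1, with zeros to its left,
zeros in the rest of its column, and pivots move strictly to the right going down. -/
def IsRREF {k n : ℕ} {F : Type*} [Field F] (M : Matrix (Fin k) (Fin n) F) : Prop :=
  (∀ i j : Fin k, i ≤ j → M i = 0 → M j = 0) ∧
  ∀ i : Fin k, M i ≠ 0 →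
    ∃ c : Fin n, M i c = 1 ∧ (∀ c' : Fin n, c' < c → M i c' = 0) ∧
      (∀ i' : Fin k, i' ≠ i → M i' c = 0) ∧
      ∀ i' : Fin k, i < i' → M i' ≠ 0 →
        ∀ c' : Fin n, (M i' c' ≠ 0 ∧ ∀ c'' : Fin n, c'' < c' → M i' c'' = 0) → c < c'

open Submodule
open scoped Finset

section Hamming

variable {ι β : Type*} [Fintype ι] [DecidableEq β] [Zero β]

theorem hammingNorm_comp_perm (v : ι → β) (σ : Equiv.Perm ι) :
    hammingNorm (v ∘ σ) = hammingNorm v :=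
  Finset.card_equiv σ (by simp)

theorem card_filter_eq_zero_add_hammingNorm (v : ι → β) :
    #{i | v i = 0} + hammingNorm v = Fintype.card ι :=
  Finset.card_filter_add_card_filter_not _

theorem hammingNorm_le_sub_of_forall_lt {n t : ℕ} {v : Fin n → β}
    (hv : ∀ j : Fin n, (j : ℕ) < t → v j = 0) : hammingNorm v ≤ n - t := by
  have hsupp : hammingNorm v ≤ #{j : Fin n | ¬(j : ℕ) < t} :=
    Finset.card_le_card fun j => by
      simp only [Finset.mem_filter, Finset.mem_univ, true_and]
      exact mt (hv j)
  have hsplit :=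
    Finset.card_filter_add_card_filter_not (s := Finset.univ) fun j : Fin n => (j : ℕ) < t
  rw [Fin.card_filter_val_lt, Finset.card_univ, Fintype.card_fin] at hsplit
  omega

end Hamming

theorem Equiv.Perm.exists_forall_lt_card_mem {n : ℕ} (s : Finset (Fin n)) :
    ∃ σ : Equiv.Perm (Fin n), ∀ j : Fin n, (j : ℕ) < #s → σ j ∈ s := by
  classical
  have hcard : Fintype.card {j : Fin n // (j : ℕ) < #s} = Fintype.card s := by
    rw [Fintype.card_subtype, Fin.card_filter_val_lt, Fintype.card_coe,
      min_eq_right (s.card_le_univ.trans_eq (Fintype.card_fin n))]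
  let e := Fintype.equivOfCardEq hcard
  exact ⟨e.extendSubtype, fun j hj => by
    rw [Equiv.extendSubtype_apply_of_mem e j hj]; exact (e ⟨j, hj⟩).2⟩

theorem isRREF_of_strictMono_pivots {k n : ℕ} {F : Type*} [Field F]
    {R : Matrix (Fin k) (Fin n) F} (p : Fin k → Fin n) (hp : StrictMono p)
    (hpivot : ∀ i l, R i (p l) = (1 : Matrix (Fin k) (Fin k) F) i l)
    (hleft : ∀ i j, j < p i → R i j = 0) : IsRREF R := by
  have hone : ∀ i, R i (p i) = 1 := fun i => by rw [hpivot, Matrix.one_apply_eq]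
  refine ⟨fun i _ _ h0 => absurd (congrFun h0 (p i)) (by simp [hone]),
    fun i _ => ⟨p i, hone i, hleft i, fun i' hi' => by rw [hpivot, Matrix.one_apply_ne hi'], ?_⟩⟩
  intro i' hii' _ c' hc'
  exact (hp hii').trans_le (not_lt.mp fun h => hc'.1 (hleft i' c' h))

theorem Matrix.span_range_mul_of_isUnit {m n R : Type*} [Fintype m] [DecidableEq m] [CommRing R]
    {A : Matrix m m R} (hA : IsUnit A) (M : Matrix m n R) :
    span R (Set.range (A * M)) = span R (Set.range M) := by
  have hcomp : (A * M).vecMulLinear = M.vecMulLinear ∘ₗ A.vecMulLinear :=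
    LinearMap.ext fun v => (Matrix.vecMul_vecMul v A M).symm
  have hsurj : LinearMap.range A.vecMulLinear = ⊤ :=
    LinearMap.range_eq_top.mpr (Matrix.vecMul_surjective_iff_isUnit.mpr hA)
  have := LinearMap.range_comp_of_range_eq_top M.vecMulLinear hsurj
  rwa [← hcomp, range_vecMulLinear, range_vecMulLinear] at this

namespace Matrix

variable {k n : ℕ} {F : Type*} [Field F]

open Classical in
noncomputable def pivotCols (M : Matrix (Fin k) (Fin n) F) : Finset (Fin n) :=
  {j | M.col j ∉ span F (M.col '' Set.Iio j)}

theorem col_mem_span_pivotCols (M : Matrix (Fin k) (Fin n) F) (j : Fin n) :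
    M.col j ∈ span F (M.col '' {p | p ∈ M.pivotCols ∧ p ≤ j}) := by
  induction j using WellFoundedLT.induction with
  | _ j ih =>
  by_cases hj : j ∈ M.pivotCols
  · exact subset_span (Set.mem_image_of_mem _ ⟨hj, le_rfl⟩)
  · have hleft : M.col j ∈ span F (M.col '' Set.Iio j) := by simpa [pivotCols] using hj
    refine span_le.mpr ?_ hleft
    rintro _ ⟨j', hj', rfl⟩
    have hmono : {p | p ∈ M.pivotCols ∧ p ≤ j'} ⊆ {p | p ∈ M.pivotCols ∧ p ≤ j} :=
      fun p hp => ⟨hp.1, hp.2.trans hj'.le⟩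
    exact span_mono (Set.image_mono hmono) (ih j' hj')

theorem linearIndepOn_pivotCols (M : Matrix (Fin k) (Fin n) F) :
    LinearIndepOn F M.col (M.pivotCols : Set (Fin n)) := by
  classical
  suffices ∀ s : Finset (Fin n), s ⊆ M.pivotCols → LinearIndepOn F M.col (s : Set (Fin n)) from
    this _ subset_rfl
  intro s
  induction s using Finset.induction_on_max with
  | empty => simp
  | insert a s has ih =>
    intro hs
    rw [Finset.coe_insert, linearIndepOn_insert fun ha => lt_irrefl a (has a ha)]
    refine ⟨ih ((Finset.subset_insert a s).trans hs), fun hmem => ?_⟩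
    have ha : a ∈ M.pivotCols := hs (Finset.mem_insert_self a s)
    simp only [pivotCols, Finset.mem_filter, Finset.mem_univ, true_and] at ha
    exact ha (span_mono (Set.image_mono fun j hj => has j hj) hmem)

theorem card_pivotCols {M : Matrix (Fin k) (Fin n) F} (hM : LinearIndependent F M) :
    #M.pivotCols = k := by
  have hcols : span F (Set.range M.col) = ⊤ := by
    apply eq_top_of_finrank_eq
    rw [← rank_eq_finrank_span_cols, LinearIndependent.rank_matrix hM, Module.finrank_fin_fun,
      Fintype.card_fin]
  have hspan : ⊤ ≤ span F (Set.range fun p : (M.pivotCols : Set (Fin n)) => M.col p) := by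
    rw [← hcols, span_le]
    rintro _ ⟨j, rfl⟩
    refine span_mono ?_ (M.col_mem_span_pivotCols j)
    rintro _ ⟨p, hp, rfl⟩
    exact ⟨⟨p, hp.1⟩, rfl⟩
  have := Module.finrank_eq_card_basis (Module.Basis.mk M.linearIndepOn_pivotCols hspan)
  simpa using this.symm

theorem exists_isUnit_mul_isRREF {M : Matrix (Fin k) (Fin n) F} (hM : LinearIndependent F M) :
    ∃ A : Matrix (Fin k) (Fin k) F, IsUnit A ∧ IsRREF (A * M) := by
  set p := M.pivotCols.orderEmbOfFin (card_pivotCols hM)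
  set B := M.submatrix id p
  have hB : IsUnit B := by
    rw [← linearIndependent_cols_iff_isUnit]
    exact M.linearIndepOn_pivotCols.comp (fun i => ⟨p i, Finset.orderEmbOfFin_mem _ _ i⟩)
      fun i l h => p.injective (congrArg Subtype.val h)
  have hpivot : ∀ i l, (B⁻¹ * M) i (p l) = (1 : Matrix (Fin k) (Fin k) F) i l := by
    intro i l
    rw [← nonsing_inv_mul B ((isUnit_iff_isUnit_det B).mp hB)]
    rfl
  refine ⟨B⁻¹, isUnit_nonsing_inv_iff.mpr hB, isRREF_of_strictMono_pivots p p.strictMono hpivot ?_⟩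
  intro i j hj
  -- row `i` of `B⁻¹` kills every pivot column except `p i`, hence every column left of `p i`
  let φ : (Fin k → F) →ₗ[F] F := (LinearMap.proj i).comp B⁻¹.mulVecLin
  have hker : span F (M.col '' {q | q ∈ M.pivotCols ∧ q ≤ j}) ≤ LinearMap.ker φ := by
    rw [span_le]
    rintro _ ⟨q, ⟨hq, hqj⟩, rfl⟩
    obtain ⟨l, rfl⟩ : q ∈ Set.range p := by rwa [Finset.range_orderEmbOfFin]
    have hli : i ≠ l := by rintro rfl; exact hqj.not_gt hj
    show (B⁻¹ * M) i (p l) = 0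
    rw [hpivot, one_apply_ne hli]
  exact hker (M.col_mem_span_pivotCols j)

end Matrix

theorem IsRREF.exists_row_ne_zero_forall_lt {k n : ℕ} {F : Type*} [Field F]
    {R : Matrix (Fin k) (Fin n) F} (hR : IsRREF R) {v : Fin n → F}
    (hv : v ∈ span F (Set.range R)) (hv0 : v ≠ 0) {t : ℕ}
    (hvt : ∀ j : Fin n, (j : ℕ) < t → v j = 0) :
    ∃ i, R i ≠ 0 ∧ ∀ j : Fin n, (j : ℕ) < t → R i j = 0 := by
  by_contra! h
  obtain ⟨a, rfl⟩ := (mem_span_range_iff_exists_fun F).mp hv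
  refine hv0 (Finset.sum_eq_zero fun i _ => ?_)
  by_cases hi : R i = 0
  · rw [hi, smul_zero]
  obtain ⟨c, hc1, hcleft, hccol, -⟩ := hR.2 i hi
  obtain ⟨j, hjt, hj⟩ := h i hi
  have hcj : c ≤ j := not_lt.mp fun hjc => hj (hcleft j hjc)
  -- the pivot column `c` lies in the zero block of `v` and reads off the coefficient `a i`
  have hvc := hvt c ((Fin.le_def.mp hcj).trans_lt hjt)
  rw [Finset.sum_apply, Finset.sum_eq_single i (fun l _ hl => by simp [hccol l hl]) (by simp)]
    at hvc
  simp only [Pi.smul_apply, hc1, smul_eq_mul, mul_one] at hvc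
  rw [hvc, zero_smul]

theorem exists_perm_rref_row_weight_eq_minDist_general
    {k n : ℕ} {F : Type*} [Field F] [DecidableEq F]
    (G : Matrix (Fin k) (Fin n) F) (C : Submodule F (Fin n → F))
    (hC : C = Submodule.span F (Set.range G))
    (hbasis : LinearIndependent F G)
    (d : ℕ)
    (hd : IsLeast {w | ∃ c ∈ C, c ≠ 0 ∧ hammingNorm c = w} d) :
    ∃ (σ : Equiv.Perm (Fin n)) (R : Matrix (Fin k) (Fin n) F)
      (A : Matrix (Fin k) (Fin k) F),
      IsUnit A ∧ R = A * G.submatrix id σ ∧ IsRREF R ∧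
      ∃ i : Fin k, hammingNorm (R i) = d := by
  obtain ⟨⟨c, hcC, hc0, rfl⟩, hmin⟩ := hd
  obtain ⟨σ, hσ⟩ := Equiv.Perm.exists_forall_lt_card_mem {j | c j = 0}
  have hcard := card_filter_eq_zero_add_hammingNorm c
  rw [Fintype.card_fin] at hcard
  let e := LinearEquiv.funCongrLeft F F σ
  have hM : LinearIndependent F (G.submatrix id σ) := hbasis.map' e.toLinearMap e.ker
  obtain ⟨A, hA, hR⟩ := Matrix.exists_isUnit_mul_isRREF hM
  have hrows : span F (Set.range (A * G.submatrix id σ)) = C.map e.toLinearMap := by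
    rw [Matrix.span_range_mul_of_isUnit hA, hC, map_span]
    exact congrArg (span F) (Set.range_comp e.toLinearMap G)
  obtain ⟨i, hi0, hit⟩ := hR.exists_row_ne_zero_forall_lt (hrows ▸ mem_map_of_mem hcC)
    ((LinearEquiv.map_ne_zero_iff e).mpr hc0) (t := n - hammingNorm c)
    fun j hj => (Finset.mem_filter.mp (hσ j (by omega))).2
  obtain ⟨u, huC, hu⟩ := mem_map.mp (hrows ▸ subset_span (Set.mem_range_self i))
  refine ⟨σ, _, A, hA, rfl, hR, i, le_antisymm ?_ ?_⟩
  · have hweight := hammingNorm_le_sub_of_forall_lt hit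
    omega
  · rw [← hu]
    change hammingNorm c ≤ hammingNorm (u ∘ σ)
    rw [hammingNorm_comp_perm]
    exact hmin ⟨u, huC, fun hu0 => hi0 (by rw [← hu, hu0, map_zero]), rfl⟩

/-- Given a generating matrix `G` of a linear code `C` over a finite field (its rows form a
basis of `C`), there is a column permutation `σ` such that the RREF `R` of the
column-permuted matrix `G·P_σ` has a row whose Hamming weight equals the minimum
distance `d` of `C`. -/
theorem exists_perm_rref_row_weight_eq_minDist
    {k n : ℕ} {F : Type*} [Field F] [Fintype F] [DecidableEq F]
    (G : Matrix (Fin k) (Fin n) F) (C : Submodule F (Fin n → F))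
    (hC : C = Submodule.span F (Set.range G))
    (hbasis : LinearIndependent F G)
    (d : ℕ)
    (hd : IsLeast {w | ∃ c ∈ C, c ≠ 0 ∧ hammingNorm c = w} d) :
    ∃ (σ : Equiv.Perm (Fin n)) (R : Matrix (Fin k) (Fin n) F)
      (A : Matrix (Fin k) (Fin k) F),
      IsUnit A ∧ R = A * G.submatrix id σ ∧ IsRREF R ∧
      ∃ i : Fin k, hammingNorm (R i) = d :=
  exists_perm_rref_row_weight_eq_minDist_general G C hC hbasis d hd
end

section
/- If two matrices in reduced row echelon form are row equivalent, then they are equal. -/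
open Finset
open scoped Classical

lemma first_nonzero_unique {n : ℕ} {F : Type*} [Field F] (v : Fin n → F)
    {c1 c2 : Fin n} (h1 : v c1 ≠ 0) (h1' : ∀ c' < c1, v c' = 0)
    (h2 : v c2 ≠ 0) (h2' : ∀ c' < c2, v c' = 0) : c1 = c2 := by
  rcases lt_trichotomy c1 c2 with h | h | h
  · exact absurd (h2' c1 h) h1
  · exact h
  · exact absurd (h1' c2 h) h2

lemma expand_aux {k n : ℕ} {F : Type*} [Field F]
    (P Q : Matrix (Fin k) (Fin n) F) (R : Matrix (Fin k) (Fin k) F) (hQ : Q = R * P)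
    (p : Fin k → Fin n)
    (h1 : ∀ j, P j ≠ 0 → P j (p j) = 1)
    (h3 : ∀ j, P j ≠ 0 → ∀ i', i' ≠ j → P i' (p j) = 0)
    (i : Fin k) (c : Fin n) :
    Q i c = ∑ j ∈ Finset.univ.filter (fun j => P j ≠ 0), Q i (p j) * P j c := by
  have hmul : ∀ c, Q i c = ∑ j, R i j * P j c := by
    intro c; rw [hQ]; exact Matrix.mul_apply
  have hcoef : ∀ j, P j ≠ 0 → Q i (p j) = R i j := by
    intro j hj
    rw [hmul, Finset.sum_eq_single j]
    · rw [h1 j hj, mul_one]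
    · intro j' _ hj'
      rw [h3 j hj j' hj', mul_zero]
    · simp
  rw [hmul c, ← Finset.sum_filter_add_sum_filter_not Finset.univ (fun j => P j ≠ 0)]
  have hz : ∑ j ∈ Finset.univ.filter (fun j => ¬ P j ≠ 0), R i j * P j c = 0 := by
    apply Finset.sum_eq_zero
    intro j hj
    simp only [Finset.mem_filter, not_not] at hj
    rw [hj.2]
    simp
  rw [hz, add_zero]
  exact Finset.sum_congr rfl fun j hj => by
    rw [hcoef j (Finset.mem_filter.mp hj).2]

/-- Two row-equivalent matrices in reduced row echelon form are equal. -/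
theorem rref_unique
    {k n : ℕ} {F : Type*} [Field F]
    (M N : Matrix (Fin k) (Fin n) F)
    (hM : IsRREF M) (hN : IsRREF N)
    (h : ∃ S : Matrix (Fin k) (Fin k) F, IsUnit S ∧ M = S * N) :
    M = N := by
  classical
  obtain ⟨S, hS, hMN⟩ := h
  rcases Nat.eq_zero_or_pos n with hn | hn
  · subst hn; ext i c; exact c.elim0
  have hne : Nonempty (Fin n) := ⟨⟨0, hn⟩⟩
  have hdet : IsUnit S.det := (Matrix.isUnit_iff_isUnit_det S).mp hS
  have hNM : N = S⁻¹ * M := by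
    rw [hMN, ← Matrix.mul_assoc, Matrix.nonsing_inv_mul S hdet, Matrix.one_mul]
  choose! pN hN1 hN2 hN3 hN4 using hN.2
  choose! pM hM1 hM2 hM3 hM4 using hM.2
  have hMexp : ∀ i c, M i c =
      ∑ j ∈ Finset.univ.filter (fun j => N j ≠ 0), M i (pN j) * N j c :=
    expand_aux N M S hMN pN hN1 hN3
  have hNexp : ∀ i c, N i c =
      ∑ j ∈ Finset.univ.filter (fun j => M j ≠ 0), N i (pM j) * M j c :=
    expand_aux M N S⁻¹ hNM pM hM1 hM3
  -- pivots of N strictly increase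
  have hNmono : ∀ i j : Fin k, i < j → N i ≠ 0 → N j ≠ 0 → pN i < pN j := by
    intro i j hij hi hj
    exact hN4 i hi j hij hj (pN j)
      ⟨by rw [hN1 j hj]; exact one_ne_zero, fun c'' h => hN2 j hj c'' h⟩
  have hMmono : ∀ i j : Fin k, i < j → M i ≠ 0 → M j ≠ 0 → pM i < pM j := by
    intro i j hij hi hj
    exact hM4 i hi j hij hj (pM j)
      ⟨by rw [hM1 j hj]; exact one_ne_zero, fun c'' h => hM2 j hj c'' h⟩
  -- if rows agree, pivots agree
  have piv_eq : ∀ j : Fin k, M j = N j → M j ≠ 0 → pM j = pN j := by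
    intro j hMNj hj
    have hj' : N j ≠ 0 := hMNj ▸ hj
    refine first_nonzero_unique (M j) ?_ (hM2 j hj) ?_ ?_
    · rw [hM1 j hj]; exact one_ne_zero
    · rw [hMNj, hN1 j hj']; exact one_ne_zero
    · intro c' hc'; rw [hMNj]; exact hN2 j hj' c' hc'
  have key : ∀ m : ℕ, ∀ i : Fin k, (i : ℕ) = m → M i = N i := by
    intro m
    induction m using Nat.strong_induction_on with
    | _ m IH =>
    intro i him
    have IH' : ∀ j : Fin k, j < i → M j = N j := by
      intro j hj
      exact IH j (by rw [← him]; exact hj) j rfl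
    by_cases hMi : M i = 0 <;> by_cases hNi : N i = 0
    · rw [hMi, hNi]
    · -- M i = 0, N i ≠ 0 : contradiction
      exfalso
      apply hNi
      funext c
      rw [hNexp i c]
      apply Finset.sum_eq_zero
      intro j hj
      have hj2 : M j ≠ 0 := (Finset.mem_filter.mp hj).2
      have hji : j < i := by
        by_contra hle
        exact hj2 (hM.1 i j (le_of_not_gt hle) hMi)
      have hMNj := IH' j hji
      have hj3 : N j ≠ 0 := hMNj ▸ hj2
      rw [piv_eq j hMNj hj2, hN3 j hj3 i (ne_of_gt hji), zero_mul]
    · -- M i ≠ 0, N i = 0 : contradiction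
      exfalso
      apply hMi
      funext c
      rw [hMexp i c]
      apply Finset.sum_eq_zero
      intro j hj
      have hj2 : N j ≠ 0 := (Finset.mem_filter.mp hj).2
      have hji : j < i := by
        by_contra hle
        exact hj2 (hN.1 i j (le_of_not_gt hle) hNi)
      have hMNj := IH' j hji
      have hj3 : M j ≠ 0 := by rw [hMNj]; exact hj2
      rw [← piv_eq j hMNj hj3, hM3 j hj3 i (ne_of_gt hji), zero_mul]
    · -- both nonzero
      -- coefficients on earlier rows vanish
      have hlowM : ∀ j : Fin k, j < i → N j ≠ 0 → M i (pN j) = 0 := by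
        intro j hji hj
        have hMNj := IH' j hji
        have hj3 : M j ≠ 0 := by rw [hMNj]; exact hj
        rw [← piv_eq j hMNj hj3]
        exact hM3 j hj3 i (ne_of_gt hji)
      have hlowN : ∀ j : Fin k, j < i → M j ≠ 0 → N i (pM j) = 0 := by
        intro j hji hj
        have hMNj := IH' j hji
        have hj3 : N j ≠ 0 := hMNj ▸ hj
        rw [piv_eq j hMNj hj]
        exact hN3 j hj3 i (ne_of_gt hji)
      -- M i vanishes strictly left of pN i
      have hMlt : ∀ c' : Fin n, c' < pN i → M i c' = 0 := by
        intro c' hc'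
        rw [hMexp i c']
        apply Finset.sum_eq_zero
        intro j hj
        have hj2 : N j ≠ 0 := (Finset.mem_filter.mp hj).2
        rcases lt_trichotomy j i with hji | hji | hji
        · rw [hlowM j hji hj2, zero_mul]
        · subst hji; rw [hN2 j hj2 c' hc', mul_zero]
        · have : pN i < pN j := hNmono i j hji hNi hj2
          rw [hN2 j hj2 c' (hc'.trans this), mul_zero]
      have hNlt : ∀ c' : Fin n, c' < pM i → N i c' = 0 := by
        intro c' hc'
        rw [hNexp i c']
        apply Finset.sum_eq_zero
        intro j hj
        have hj2 : M j ≠ 0 := (Finset.mem_filter.mp hj).2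
        rcases lt_trichotomy j i with hji | hji | hji
        · rw [hlowN j hji hj2, zero_mul]
        · subst hji; rw [hM2 j hj2 c' hc', mul_zero]
        · have : pM i < pM j := hMmono i j hji hMi hj2
          rw [hM2 j hj2 c' (hc'.trans this), mul_zero]
      have hcd : pM i = pN i := by
        rcases lt_trichotomy (pM i) (pN i) with hlt | heq | hlt
        · exact absurd (hMlt (pM i) hlt) (by rw [hM1 i hMi]; exact one_ne_zero)
        · exact heq
        · exact absurd (hNlt (pN i) hlt) (by rw [hN1 i hNi]; exact one_ne_zero)
      -- splitting sums at i
      have split : ∀ f : Fin k → F, ∑ j, f j =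
          (∑ j ∈ Finset.univ.filter (fun j => j < i), f j) + f i +
          ∑ j ∈ Finset.univ.filter (fun j => i < j), f j := by
        intro f
        rw [← Finset.sum_filter_add_sum_filter_not Finset.univ (fun j => j < i) f]
        have hins : Finset.univ.filter (fun j : Fin k => ¬ j < i) =
            insert i (Finset.univ.filter (fun j => i < j)) := by
          ext j
          simp only [Finset.mem_filter, Finset.mem_univ, true_and, Finset.mem_insert, not_lt]
          constructor
          · intro hj
            exact (eq_or_lt_of_le hj).imp Eq.symm id
          · rintro (rfl | h')
            · exact le_refl j
            · exact le_of_lt h'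
        rw [hins, Finset.sum_insert (by simp)]
        ring
      -- expansions over univ
      have hMuniv : ∀ c, M i c = ∑ j, M i (pN j) * N j c := by
        intro c
        rw [hMexp i c, ← Finset.sum_filter_add_sum_filter_not Finset.univ (fun j => N j ≠ 0)
          (fun j => M i (pN j) * N j c)]
        have hz : ∑ j ∈ Finset.univ.filter (fun j => ¬ N j ≠ 0), M i (pN j) * N j c = 0 := by
          apply Finset.sum_eq_zero
          intro j hj
          simp only [Finset.mem_filter, not_not] at hj
          rw [hj.2]; simp
        rw [hz, add_zero]
      have hNuniv : ∀ c, N i c = ∑ j, N i (pM j) * M j c := by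
        intro c
        rw [hNexp i c, ← Finset.sum_filter_add_sum_filter_not Finset.univ (fun j => M j ≠ 0)
          (fun j => N i (pM j) * M j c)]
        have hz : ∑ j ∈ Finset.univ.filter (fun j => ¬ M j ≠ 0), N i (pM j) * M j c = 0 := by
          apply Finset.sum_eq_zero
          intro j hj
          simp only [Finset.mem_filter, not_not] at hj
          rw [hj.2]; simp
        rw [hz, add_zero]
      have hv : ∀ c, M i c - N i c =
          ∑ j ∈ Finset.univ.filter (fun j => i < j), M i (pN j) * N j c := by
        intro c
        rw [hMuniv c, split]
        have h1 : ∑ j ∈ Finset.univ.filter (fun j => j < i), M i (pN j) * N j c = 0 := by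
          apply Finset.sum_eq_zero
          intro j hj
          have hji : j < i := (Finset.mem_filter.mp hj).2
          by_cases hj2 : N j = 0
          · rw [hj2]; simp
          · rw [hlowM j hji hj2, zero_mul]
        have h2 : M i (pN i) = 1 := by rw [← hcd, hM1 i hMi]
        rw [h1, h2, zero_add, one_mul]
        ring
      have hw : ∀ c, N i c - M i c =
          ∑ j ∈ Finset.univ.filter (fun j => i < j), N i (pM j) * M j c := by
        intro c
        rw [hNuniv c, split]
        have h1 : ∑ j ∈ Finset.univ.filter (fun j => j < i), N i (pM j) * M j c = 0 := by
          apply Finset.sum_eq_zero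
          intro j hj
          have hji : j < i := (Finset.mem_filter.mp hj).2
          by_cases hj2 : M j = 0
          · rw [hj2]; simp
          · rw [hlowN j hji hj2, zero_mul]
        have h2 : N i (pM i) = 1 := by rw [hcd, hN1 i hNi]
        rw [h1, h2, zero_add, one_mul]
        ring
      -- all later coefficients vanish
      have hs : ∀ j : Fin k, i < j → N j ≠ 0 → M i (pN j) = 0 := by
        by_contra hcon
        push_neg at hcon
        set s : Finset (Fin k) :=
          Finset.univ.filter (fun j => i < j ∧ N j ≠ 0 ∧ M i (pN j) ≠ 0) with hs_def
        have hs_ne : s.Nonempty := by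
          obtain ⟨j, hj1, hj2, hj3⟩ := hcon
          refine ⟨j, ?_⟩
          exact Finset.mem_filter.mpr ⟨Finset.mem_univ j, hj1, hj2, hj3⟩
        set j0 := s.min' hs_ne with hj0_def
        have hj0 : i < j0 ∧ N j0 ≠ 0 ∧ M i (pN j0) ≠ 0 := by
          have h := s.min'_mem hs_ne
          exact (Finset.mem_filter.mp h).2
        have claimA : ∀ c' : Fin n, c' < pN j0 → M i c' - N i c' = 0 := by
          intro c' hc'
          rw [hv c']
          apply Finset.sum_eq_zero
          intro j hj
          have hji : i < j := (Finset.mem_filter.mp hj).2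
          by_cases hj2 : N j = 0
          · rw [hj2]; simp
          by_cases hj3 : M i (pN j) = 0
          · rw [hj3, zero_mul]
          have hjs : j ∈ s := by
            exact Finset.mem_filter.mpr ⟨Finset.mem_univ j, hji, hj2, hj3⟩
          have hj0le : j0 ≤ j := s.min'_le j hjs
          have hple : pN j0 ≤ pN j := by
            rcases eq_or_lt_of_le hj0le with h' | h'
            · rw [h']
            · exact le_of_lt (hNmono j0 j h' hj0.2.1 hj2)
          rw [hN2 j hj2 c' (lt_of_lt_of_le hc' hple), mul_zero]
        have hNi0 : N i (pN j0) = 0 := hN3 j0 hj0.2.1 i (ne_of_lt hj0.1)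
        -- the t set
        have ht_ne : ∃ l : Fin k, i < l ∧ M l ≠ 0 ∧ N i (pM l) ≠ 0 := by
          by_contra htc
          push_neg at htc
          have : N i (pN j0) - M i (pN j0) = 0 := by
            rw [hw (pN j0)]
            apply Finset.sum_eq_zero
            intro j hj
            have hji : i < j := (Finset.mem_filter.mp hj).2
            by_cases hj2 : M j = 0
            · rw [hj2]; simp
            · rw [htc j hji hj2, zero_mul]
          have heq : M i (pN j0) = N i (pN j0) := (sub_eq_zero.mp this).symm
          exact hj0.2.2 (heq.trans hNi0)
        set t : Finset (Fin k) :=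
          Finset.univ.filter (fun l => i < l ∧ M l ≠ 0 ∧ N i (pM l) ≠ 0) with ht_def
        have ht_ne' : t.Nonempty := by
          obtain ⟨l, hl1, hl2, hl3⟩ := ht_ne
          refine ⟨l, ?_⟩
          exact Finset.mem_filter.mpr ⟨Finset.mem_univ l, hl1, hl2, hl3⟩
        set l0 := t.min' ht_ne' with hl0_def
        have hl0 : i < l0 ∧ M l0 ≠ 0 ∧ N i (pM l0) ≠ 0 := by
          have h := t.min'_mem ht_ne'
          exact (Finset.mem_filter.mp h).2
        have claimA' : ∀ c' : Fin n, c' < pM l0 → N i c' - M i c' = 0 := by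
          intro c' hc'
          rw [hw c']
          apply Finset.sum_eq_zero
          intro j hj
          have hji : i < j := (Finset.mem_filter.mp hj).2
          by_cases hj2 : M j = 0
          · rw [hj2]; simp
          by_cases hj3 : N i (pM j) = 0
          · rw [hj3, zero_mul]
          have hjt : j ∈ t := by
            exact Finset.mem_filter.mpr ⟨Finset.mem_univ j, hji, hj2, hj3⟩
          have hl0le : l0 ≤ j := t.min'_le j hjt
          have hple : pM l0 ≤ pM j := by
            rcases eq_or_lt_of_le hl0le with h' | h'
            · rw [h']
            · exact le_of_lt (hMmono l0 j h' hl0.2.1 hj2)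
          rw [hM2 j hj2 c' (lt_of_lt_of_le hc' hple), mul_zero]
        have hMil0 : M i (pM l0) = 0 := hM3 l0 hl0.2.1 i (ne_of_lt hl0.1)
        rcases lt_trichotomy (pN j0) (pM l0) with hlt | heq | hlt
        · have := claimA' (pN j0) hlt
          rw [hNi0, zero_sub, neg_eq_zero] at this
          exact hj0.2.2 this
        · apply hj0.2.2
          rw [heq]
          exact hMil0
        · have := claimA (pM l0) hlt
          rw [hMil0, zero_sub, neg_eq_zero] at this
          exact hl0.2.2 this
      -- conclude M i = N i
      funext c
      have := hv c
      have hz : ∑ j ∈ Finset.univ.filter (fun j => i < j), M i (pN j) * N j c = 0 := by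
        apply Finset.sum_eq_zero
        intro j hj
        have hji : i < j := (Finset.mem_filter.mp hj).2
        by_cases hj2 : N j = 0
        · rw [hj2]; simp
        · rw [hs j hji hj2, zero_mul]
      rw [hz] at this
      exact sub_eq_zero.mp this
  ext i c
  rw [key i.val i rfl]
end
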